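/- Let E be a type of edges, c_l, c_t : E → ℝ≥0∞ with c_l(e) ≤ c_t(e) for all e, and for S ⊆ E let c_S(e) = c_t(e) if e ∈ S and c_l(e) otherwise. Let P be a set of paths, ε : ℝ≥0∞ with 1 ≤ ε, and let π ∈ P be a path such that (i) every edge of π lies in S (all its edges have been evaluated) and (ii) cost_{c_S}(π) ≤ ε * sInf { cost_{c_S}(π') | π' ∈ P }. Then cost_{c_t}(π) ≤ ε * sInf { cost_{c_t}(π') | π' ∈ P }. (Combined form of Lemma 1 and Theorem 2: the path returned by MPLP, whose edges have all been evaluated and which was certified ε-suboptimal in the partially evaluated graph, is ε-suboptimal with respect to the true edge costs.) -/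
import Mathlib


open scoped ENNReal
open Classical

/-- Cost of a path (a finite list of edges) under edge-cost function `c`. -/
noncomputable def pathCost {E : Type*} (c : E → ℝ≥0∞) (π : List E) : ℝ≥0∞ :=
  (π.map c).sum

/-- Partially evaluated cost function: true cost on evaluated edges `S`, lazy estimate elsewhere. -/
noncomputable def partialCost {E : Type*} (cl ct : E → ℝ≥0∞) (S : Set E) (e : E) : ℝ≥0∞ :=
  if e ∈ S then ct e else cl e

/-- Combined Lemma 1 / Theorem 2: a fully evaluated path, certified `ε`-suboptimal in the
partially evaluated graph, is `ε`-suboptimal with respect to the true edge costs. -/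
theorem mplp_certified_path_suboptimality {E : Type*} (cl ct : E → ℝ≥0∞)
    (hle : ∀ e, cl e ≤ ct e) (S : Set E)
    (P : Set (List E)) (ε : ℝ≥0∞) (hε : 1 ≤ ε)
    (π : List E) (hπ : π ∈ P)
    (heval : ∀ e ∈ π, e ∈ S)
    (hcert : pathCost (partialCost cl ct S) π
        ≤ ε * sInf {x | ∃ π' ∈ P, pathCost (partialCost cl ct S) π' = x}) :
    pathCost ct π ≤ ε * sInf {x | ∃ π' ∈ P, pathCost ct π' = x} := by
  have hπeq : pathCost (partialCost cl ct S) π = pathCost ct π := by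
    unfold pathCost
    congr 1
    exact List.map_congr_left fun e he => if_pos (heval e he)
  have hmono : ∀ π' : List E, pathCost (partialCost cl ct S) π' ≤ pathCost ct π' := by
    intro π'
    unfold pathCost
    induction π' with
    | nil => simp
    | cons a l ih =>
      simp only [List.map_cons, List.sum_cons]
      refine add_le_add ?_ ih
      unfold partialCost
      split <;> [exact le_rfl; exact hle a]
  have hInf : sInf {x | ∃ π' ∈ P, pathCost (partialCost cl ct S) π' = x}
      ≤ sInf {x | ∃ π' ∈ P, pathCost ct π' = x} := by
    refine le_sInf ?_
    rintro x ⟨π', hπ', rfl⟩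
    have hx : pathCost (partialCost cl ct S) π' ∈
        {x | ∃ π'' ∈ P, pathCost (partialCost cl ct S) π'' = x} := ⟨π', hπ', rfl⟩
    exact (sInf_le hx).trans (hmono π')
  calc pathCost ct π = pathCost (partialCost cl ct S) π := hπeq.symm
    _ ≤ ε * sInf {x | ∃ π' ∈ P, pathCost (partialCost cl ct S) π' = x} := hcert
    _ ≤ ε * sInf {x | ∃ π' ∈ P, pathCost ct π' = x} := mul_le_mul_right hInf ε
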